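/- With the setup above, the map g sending β = (β_1, …, β_ℓ) to (τ1, τ2, β_1, …, β_ℓ), which prepends τ1 traversed from a to d followed by τ2 traversed from d to c, is a bijection from P_T(ρ)_{−τ2} onto P_T(γ)_{τ1,τ2}. Moreover, for every β in its domain and every function x assigning nonzero field elements to arcs, x(g(β)) = (x(τ1)/x(τ2)) · x(β). (This is the second half of Lemma 4.5 of the paper in the polygon model.) -/

import Mathlib

open scoped Classical

namespace PolygonCA

/-- An oriented arc: an ordered pair of vertices. -/
abbrev OArc (N : ℕ) := ZMod N × ZMod N

variable (N : ℕ)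

/-- `x` lies strictly between `p` and `q` in the counterclockwise cyclic order. -/
def Sbtw (p x q : ZMod N) : Prop :=
  0 < (x - p).val ∧ (x - p).val < (q - p).val

/-- A boundary arc: an unordered pair of cyclically adjacent vertices. -/
def IsBoundaryArc (e : Sym2 (ZMod N)) : Prop :=
  ∃ p : ZMod N, e = s(p, p + 1)

/-- A diagonal: an unordered pair of distinct non-adjacent vertices. -/
def IsPolyDiag (e : Sym2 (ZMod N)) : Prop :=
  ∃ p q : ZMod N, e = s(p, q) ∧ p ≠ q ∧ q ≠ p + 1 ∧ p ≠ q + 1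

/-- An arc: a diagonal or a boundary arc. -/
def IsArc (e : Sym2 (ZMod N)) : Prop :=
  IsPolyDiag N e ∨ IsBoundaryArc N e

/-- Two diagonals cross. -/
def Crosses (e f : Sym2 (ZMod N)) : Prop :=
  ∃ p q u v : ZMod N, e = s(p, q) ∧ f = s(u, v) ∧ Sbtw N p u q ∧ Sbtw N q v p

/-- A triangulation of the convex `N`-gon: a maximal set of pairwise
non-crossing diagonals. -/
structure IsTriangulation (T : Finset (Sym2 (ZMod N))) : Prop where
  diag : ∀ e ∈ T, IsPolyDiag N e
  noncross : ∀ e ∈ T, ∀ f ∈ T, ¬ Crosses N e f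
  maximal : ∀ e, IsPolyDiag N e → (∀ f ∈ T, ¬ Crosses N e f ∧ ¬ Crosses N f e) → e ∈ T

/-- For two (non-crossing) diagonals `e`, `f` both crossing the diagonal
oriented from `a` to `b`: `e` crosses it strictly before `f` does. -/
def CrossBefore (a b : ZMod N) (e f : Sym2 (ZMod N)) : Prop :=
  ∃ c d c' d' : ZMod N, e = s(c, d) ∧ f = s(c', d') ∧
    Sbtw N a c b ∧ Sbtw N b d a ∧ Sbtw N a c' b ∧ Sbtw N b d' a ∧
    (c - a).val ≤ (c' - a).val ∧ (a - d).val ≤ (a - d').val ∧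
    ((c - a).val < (c' - a).val ∨ (a - d).val < (a - d').val)

/-- A `T`-path from `a` to `b`: a nonempty concatenation of oriented arcs of
`T` or boundary arcs, starting at `a` and ending at `b`. -/
def IsTPath (T : Finset (Sym2 (ZMod N))) (a b : ZMod N) (α : List (OArc N)) : Prop :=
  α ≠ [] ∧
  (∀ e ∈ α, Sym2.mk.uncurry e ∈ T ∨ IsBoundaryArc N (Sym2.mk.uncurry e)) ∧
  α.head?.map Prod.fst = some a ∧
  α.getLast?.map Prod.snd = some b ∧
  α.Chain' (fun e f => f.1 = e.2)

/-- A `T`-path is reduced if no arc is immediately followed by its reverse. -/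
def IsReduced (α : List (OArc N)) : Prop :=
  α.Chain' (fun e f => f ≠ (e.2, e.1))

/-- A `(T,γ)`-path, where `γ` is the diagonal oriented from `a` to `b`.
(Positions are `0`-indexed here, so the paper's even positions are the odd
indices.) -/
def IsTGPath (T : Finset (Sym2 (ZMod N))) (a b : ZMod N) (α : List (OArc N)) : Prop :=
  IsTPath N T a b α ∧ IsReduced N α ∧ Odd α.length ∧
  (∀ (i : ℕ) (h : i < α.length), i % 2 = 1 →
      Sym2.mk.uncurry (α.get ⟨i, h⟩) ∈ T ∧ Crosses N (Sym2.mk.uncurry (α.get ⟨i, h⟩)) s(a, b)) ∧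
  (∀ (i j : ℕ) (hi : i < α.length) (hj : j < α.length),
      i % 2 = 1 → j % 2 = 1 → i ≠ j →
      Sym2.mk.uncurry (α.get ⟨i, hi⟩) ≠ Sym2.mk.uncurry (α.get ⟨j, hj⟩)) ∧
  (∀ (i j : ℕ) (hi : i < α.length) (hj : j < α.length),
      i % 2 = 1 → j % 2 = 1 → i < j →
      CrossBefore N a b (Sym2.mk.uncurry (α.get ⟨i, hi⟩)) (Sym2.mk.uncurry (α.get ⟨j, hj⟩)))

/-- The Laurent monomial attached to a path: the product of `x` of the arcs in
odd (paper-)position times the inverse of `x` of the arcs in even position. -/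
noncomputable def pathValue {F : Type*} [Field F] (x : Sym2 (ZMod N) → F)
    (α : List (OArc N)) : F :=
  ∏ i : Fin α.length,
    if (i : ℕ) % 2 = 0 then x (Sym2.mk.uncurry (α.get i)) else (x (Sym2.mk.uncurry (α.get i)))⁻¹

/-- `p1, p2, p3, p4` occur in (counterclockwise) cyclic order, pairwise distinct. -/
def InCyclicOrder (p1 p2 p3 p4 : ZMod N) : Prop :=
  0 < (p2 - p1).val ∧ (p2 - p1).val < (p3 - p1).val ∧ (p3 - p1).val < (p4 - p1).val

/-- A Ptolemy assignment over a field `F`. -/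
def IsPtolemy {F : Type*} [Field F] (x : Sym2 (ZMod N) → F) : Prop :=
  (∀ e, IsArc N e → x e ≠ 0) ∧
  ∀ p1 p2 p3 p4 : ZMod N, InCyclicOrder N p1 p2 p3 p4 →
    x s(p1, p3) * x s(p2, p4) = x s(p1, p2) * x s(p3, p4) + x s(p1, p4) * x s(p2, p3)

end PolygonCA

namespace PolygonCA

variable {N : ℕ}

lemma val_sub_coord [NeZero N] (a p x : ZMod N) :
    (x - p).val =
      if (p - a).val ≤ (x - a).val then (x - a).val - (p - a).val
      else (x - a).val + N - (p - a).val := by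
  have h1 : x - p = (x - a) - (p - a) := by ring
  rw [h1]
  set u := x - a with hu
  set v := p - a with hv
  have hvN := ZMod.val_lt v
  have huN := ZMod.val_lt u
  split_ifs with h
  · exact ZMod.val_sub h
  · push_neg at h
    have hv0 : v ≠ 0 := by
      intro h0; rw [h0] at h; simp at h
    haveI : NeZero v := ⟨hv0⟩
    rw [sub_eq_add_neg, ZMod.val_add, ZMod.val_neg_of_ne_zero]
    rw [Nat.mod_eq_of_lt (by omega)]
    omega

lemma sbtw_coord [NeZero N] (a : ZMod N) {p x q : ZMod N} :
    Sbtw N p x q ↔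
      (((p - a).val < (x - a).val ∧ (x - a).val < (q - a).val) ∨
       ((q - a).val < (p - a).val ∧
         ((p - a).val < (x - a).val ∨ (x - a).val < (q - a).val))) := by
  have hx := ZMod.val_lt (x - a)
  have hp := ZMod.val_lt (p - a)
  have hq := ZMod.val_lt (q - a)
  rw [Sbtw, val_sub_coord a p x, val_sub_coord a p q]
  split_ifs <;> omega

lemma sbtw_not_both [NeZero N] {p x q : ZMod N} (h1 : Sbtw N p x q) (h2 : Sbtw N q x p) :
    False := by
  rw [sbtw_coord p] at h1 h2
  simp only [sub_self, ZMod.val_zero] at h1 h2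
  omega

lemma sbtw_concat [NeZero N] {o₁ o₂ s t : ZMod N}
    (h1 : Sbtw N o₁ s o₂) (h2 : Sbtw N o₂ t o₁) :
    Sbtw N s o₂ t ∧ Sbtw N t o₁ s := by
  rw [sbtw_coord o₁] at h1 h2
  rw [sbtw_coord o₁, sbtw_coord o₁]
  simp only [sub_self, ZMod.val_zero] at *
  have hs := ZMod.val_lt (s - o₁)
  have ht := ZMod.val_lt (t - o₁)
  have ho := ZMod.val_lt (o₂ - o₁)
  omega

lemma crosses_iff [NeZero N] {e : Sym2 (ZMod N)} {p q : ZMod N} :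
    Crosses N e s(p, q) ↔ ∃ u v, e = s(u, v) ∧ Sbtw N p u q ∧ Sbtw N q v p := by
  constructor
  · rintro ⟨P, Q, U, V, he, hf, h1, h2⟩
    rcases Sym2.eq_iff.1 hf.symm with ⟨rfl, rfl⟩ | ⟨rfl, rfl⟩
    · obtain ⟨hA, hB⟩ := sbtw_concat h1 h2
      exact ⟨Q, P, by rw [he, Sym2.eq_swap], hA, hB⟩
    · obtain ⟨hA, hB⟩ := sbtw_concat h1 h2
      exact ⟨P, Q, he, hB, hA⟩
  · rintro ⟨u, v, rfl, h1, h2⟩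
    obtain ⟨hA, hB⟩ := sbtw_concat h1 h2
    exact ⟨u, v, q, p, rfl, Sym2.eq_swap, hA, hB⟩

lemma rep_unique [NeZero N] {p q u v u' v' : ZMod N} (h : s(u, v) = s(u', v'))
    (h1 : Sbtw N p u q) (h2 : Sbtw N q v p) (h3 : Sbtw N p u' q) (h4 : Sbtw N q v' p) :
    u = u' ∧ v = v' := by
  rcases Sym2.eq_iff.1 h with ⟨rfl, rfl⟩ | ⟨rfl, rfl⟩
  · exact ⟨rfl, rfl⟩
  · exact absurd h1 (fun hh => sbtw_not_both hh h4)

lemma cb_elim [NeZero N] {p q u v u' v' : ZMod N}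
    (h : CrossBefore N p q s(u, v) s(u', v'))
    (h1 : Sbtw N p u q) (h2 : Sbtw N q v p) (h3 : Sbtw N p u' q) (h4 : Sbtw N q v' p) :
    (u - p).val ≤ (u' - p).val ∧ (p - v).val ≤ (p - v').val ∧
      ((u - p).val < (u' - p).val ∨ (p - v).val < (p - v').val) := by
  obtain ⟨C, D, C', D', he, hf, hC, hD, hC', hD', hle1, hle2, hlt⟩ := h
  obtain ⟨hu, hv⟩ := rep_unique he h1 h2 hC hD
  obtain ⟨hu', hv'⟩ := rep_unique hf h3 h4 hC' hD'
  subst hu; subst hv; subst hu'; subst hv'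
  exact ⟨hle1, hle2, hlt⟩

lemma mk_pair_cases {u v : ZMod N} (e : OArc N) (h : Sym2.mk.uncurry e = s(u, v)) :
    e = (u, v) ∨ e = (v, u) := by
  rcases e with ⟨x, y⟩
  rcases Sym2.eq_iff.1 h with ⟨rfl, rfl⟩ | ⟨rfl, rfl⟩
  · exact Or.inl rfl
  · exact Or.inr rfl

lemma pathValue_cons_cons {F : Type*} [Field F] (x : Sym2 (ZMod N) → F) (p q : OArc N)
    (β : List (OArc N)) :
    pathValue N x (p :: q :: β) = x (Sym2.mk.uncurry p) * (x (Sym2.mk.uncurry q))⁻¹ * pathValue N x β := by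
  have hpar : ∀ m : ℕ, (m + 1 + 1) % 2 = m % 2 := fun m => by omega
  unfold pathValue
  simp only [List.length_cons]
  rw [Fin.prod_univ_succ, Fin.prod_univ_succ]
  simp only [Fin.val_zero, Fin.val_succ, hpar, List.get_eq_getElem, List.getElem_cons_succ,
    List.getElem_cons_zero]
  norm_num
  ring


/-- **Lemma 4.5, second half** (polygon model): with the setup of Lemma 4.2 and
`ρ = {c,b}` oriented from `c` to `b`, the map `g` prepending `τ₁` traversed
from `a` to `d` followed by `τ₂` traversed from `d` to `c` is a bijection from
`P_T(ρ)_{−τ₂}` onto `P_T(γ)_{τ₁τ₂}`, and for any assignment `x` of nonzero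
field elements to arcs, `x(g(β)) = (x(τ₁)/x(τ₂))·x(β)`. -/
theorem bijection_g (N : ℕ) (hN : 4 ≤ N)
    (T : Finset (Sym2 (ZMod N))) (hT : IsTriangulation N T)
    (a b c d : ZMod N)
    (hγ : IsPolyDiag N s(a, b)) (hγT : s(a, b) ∉ T)
    (hτ2 : s(c, d) ∈ T) (hτ2γ : Crosses N s(c, d) s(a, b))
    (hc : Sbtw N a c b) (hd : Sbtw N b d a)
    (hfirst : ∀ e ∈ T, Crosses N e s(a, b) → e ≠ s(c, d) →
      CrossBefore N a b s(c, d) e)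
    (hτ1 : s(a, d) ∈ T ∨ IsBoundaryArc N s(a, d))
    (hτ3 : s(a, c) ∈ T ∨ IsBoundaryArc N s(a, c))
    {F : Type*} [Field F] (x : Sym2 (ZMod N) → F)
    (hx0 : ∀ e, IsArc N e → x e ≠ 0) :
    Set.BijOn (fun β : List (OArc N) => (a, d) :: (d, c) :: β)
      {β | IsTGPath N T c b β ∧ ∀ f ∈ β, Sym2.mk.uncurry f ≠ s(c, d)}
      {α | IsTGPath N T a b α ∧ α.head? = some (a, d) ∧
        α.tail.head? = some (d, c)} ∧
    ∀ β : List (OArc N), IsTGPath N T c b β → (∀ f ∈ β, Sym2.mk.uncurry f ≠ s(c, d)) →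
      pathValue N x ((a, d) :: (d, c) :: β) =
        x s(a, d) / x s(c, d) * pathValue N x β := by
  haveI : NeZero N := ⟨by omega⟩
  have hNval : ∀ u : ZMod N, (u - a).val < N := fun u => ZMod.val_lt _
  have sAB : ∀ x : ZMod N, Sbtw N a x b ↔ 0 < (x - a).val ∧ (x - a).val < (b - a).val := by
    intro x; rw [sbtw_coord a]; simp only [sub_self, ZMod.val_zero]; omega
  obtain ⟨hC1, hC2⟩ := (sAB c).1 hc
  have sBA : ∀ x : ZMod N, Sbtw N b x a ↔ (b - a).val < (x - a).val := by
    intro x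
    have := hNval x
    rw [sbtw_coord a]; simp only [sub_self, ZMod.val_zero]; omega
  have hD1 : (b - a).val < (d - a).val := (sBA d).1 hd
  have hDN := hNval d
  have hBN := hNval b
  have sCB : ∀ x : ZMod N, Sbtw N c x b ↔
      (c - a).val < (x - a).val ∧ (x - a).val < (b - a).val := by
    intro x; have := hNval x; rw [sbtw_coord a]; omega
  have sBC : ∀ x : ZMod N, Sbtw N b x c ↔
      (b - a).val < (x - a).val ∨ (x - a).val < (c - a).val := by
    intro x; have := hNval x; rw [sbtw_coord a]; omega
  have coordInj : ∀ u v : ZMod N, (u - a).val = (v - a).val → u = v := by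
    intro u v h
    have h2 : u - a = v - a := ZMod.val_injective N h
    linear_combination h2
  have coordNe : ∀ u v : ZMod N, (u - a).val ≠ (v - a).val → u ≠ v :=
    fun u v h hne => h (by rw [hne])
  have aInv : ∀ x : ZMod N, 0 < (x - a).val → (a - x).val = N - (x - a).val := by
    intro x h
    have := hNval x
    rw [val_sub_coord a x a]
    simp only [sub_self, ZMod.val_zero]
    split_ifs <;> omega
  have subC : ∀ x : ZMod N, (c - a).val ≤ (x - a).val →
      (x - c).val = (x - a).val - (c - a).val := by
    intro x h; rw [val_sub_coord a c x, if_pos h]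
  have cInv : ∀ x : ZMod N, (c - a).val < (x - a).val →
      (c - x).val = (c - a).val + N - (x - a).val := by
    intro x h; rw [val_sub_coord a x c, if_neg (by omega)]
  have cbγ : ∀ u v u' v' : ZMod N,
      0 < (u - a).val → (u - a).val < (b - a).val → (b - a).val < (v - a).val →
      0 < (u' - a).val → (u' - a).val < (b - a).val → (b - a).val < (v' - a).val →
      (CrossBefore N a b s(u, v) s(u', v') ↔
        ((u - a).val ≤ (u' - a).val ∧ (v' - a).val ≤ (v - a).val ∧
          ((u - a).val < (u' - a).val ∨ (v' - a).val < (v - a).val))) := by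
    intro u v u' v' h1 h2 h3 h4 h5 h6
    have hv := hNval v; have hv' := hNval v'
    have e1 := aInv v (by omega)
    have e2 := aInv v' (by omega)
    constructor
    · intro h
      have := cb_elim h ((sAB u).2 ⟨h1, h2⟩) ((sBA v).2 h3) ((sAB u').2 ⟨h4, h5⟩) ((sBA v').2 h6)
      omega
    · intro h
      exact ⟨u, v, u', v', rfl, rfl, (sAB u).2 ⟨h1, h2⟩, (sBA v).2 h3, (sAB u').2 ⟨h4, h5⟩,
        (sBA v').2 h6, by omega, by omega, by omega⟩
  have cbρ : ∀ u v u' v' : ZMod N,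
      (c - a).val < (u - a).val → (u - a).val < (b - a).val → (b - a).val < (v - a).val →
      (c - a).val < (u' - a).val → (u' - a).val < (b - a).val → (b - a).val < (v' - a).val →
      (CrossBefore N c b s(u, v) s(u', v') ↔
        ((u - a).val ≤ (u' - a).val ∧ (v' - a).val ≤ (v - a).val ∧
          ((u - a).val < (u' - a).val ∨ (v' - a).val < (v - a).val))) := by
    intro u v u' v' h1 h2 h3 h4 h5 h6
    have hv := hNval v; have hv' := hNval v'
    have e1 := cInv v (by omega)
    have e2 := cInv v' (by omega)
    have e3 := subC u (by omega)
    have e4 := subC u' (by omega)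
    constructor
    · intro h
      have := cb_elim h ((sCB u).2 ⟨h1, h2⟩) ((sBC v).2 (Or.inl h3)) ((sCB u').2 ⟨h4, h5⟩)
        ((sBC v').2 (Or.inl h6))
      omega
    · intro h
      exact ⟨u, v, u', v', rfl, rfl, (sCB u).2 ⟨h1, h2⟩, (sBC v).2 (Or.inl h3),
        (sCB u').2 ⟨h4, h5⟩, (sBC v').2 (Or.inl h6), by omega, by omega, by omega⟩
  have noLoop : ∀ z : ZMod N,
      ¬(Sym2.mk.uncurry ((z, z) : OArc N) ∈ T ∨ IsBoundaryArc N (Sym2.mk.uncurry ((z, z) : OArc N))) := by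
    rintro z (h | ⟨p, hp⟩)
    · obtain ⟨p, q, hpq, hne, -, -⟩ := hT.diag _ h
      rcases Sym2.eq_iff.1 hpq with ⟨rfl, rfl⟩ | ⟨rfl, rfl⟩ <;> exact hne rfl
    · have h10 : (1 : ZMod N) ≠ 0 := by
        haveI : Fact (1 < N) := ⟨by omega⟩
        exact one_ne_zero
      rcases Sym2.eq_iff.1 hp with ⟨h1, h2⟩ | ⟨h1, h2⟩
      · rw [← h1] at h2
        exact h10 (by linear_combination - h2)
      · rw [← h2] at h1
        exact h10 (by linear_combination - h1)
  have crossγ_intro : ∀ u v : ZMod N, 0 < (u - a).val → (u - a).val < (b - a).val →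
      (b - a).val < (v - a).val → Crosses N s(u, v) s(a, b) :=
    fun u v h1 h2 h3 => crosses_iff.2 ⟨u, v, rfl, (sAB u).2 ⟨h1, h2⟩, (sBA v).2 h3⟩
  have crossρ_intro : ∀ u v : ZMod N, (c - a).val < (u - a).val → (u - a).val < (b - a).val →
      (b - a).val < (v - a).val → Crosses N s(u, v) s(c, b) :=
    fun u v h1 h2 h3 => crosses_iff.2 ⟨u, v, rfl, (sCB u).2 ⟨h1, h2⟩, (sBC v).2 (Or.inl h3)⟩
  refine ⟨⟨?_, ?_, ?_⟩, ?_⟩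
  · -- MapsTo
    rintro β ⟨⟨⟨hβne, hβarcs, hβhead, hβlast, hβchain⟩, hβred, hβodd, hβ4, hβ5, hβ6⟩, hβav⟩
    obtain ⟨b0, β2, rfl⟩ := List.exists_cons_of_ne_nil hβne
    have hb0 : b0.1 = c := by simpa using hβhead
    have sideβ : ∀ i (hi : i < (b0 :: β2).length), i % 2 = 1 →
        ∃ u v, Sym2.mk.uncurry ((b0 :: β2).get ⟨i, hi⟩) = s(u, v) ∧
          (c - a).val < (u - a).val ∧ (u - a).val < (b - a).val ∧
          (b - a).val < (v - a).val := by
      intro i hi hio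
      obtain ⟨hiT, hicr⟩ := hβ4 i hi hio
      obtain ⟨u, v, he, h1', h2'⟩ := crosses_iff.1 hicr
      obtain ⟨hu1, hu2⟩ := (sCB u).1 h1'
      have hv := (sBC v).1 h2'
      refine ⟨u, v, he, hu1, hu2, ?_⟩
      rcases hv with hv | hv
      · exact hv
      · exfalso
        have hVN := hNval v
        have hUN := hNval u
        have hcr2 : Crosses N (Sym2.mk.uncurry ((b0 :: β2).get ⟨i, hi⟩)) s(c, d) := by
          rw [he]
          refine ⟨u, v, d, c, rfl, Sym2.eq_swap, ?_, ?_⟩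
          · rw [sbtw_coord a]; omega
          · rw [sbtw_coord a]; omega
        exact hT.noncross _ hiT _ hτ2 hcr2
    simp only [Set.mem_setOf_eq]
    refine ⟨⟨⟨?_, ?_, ?_, ?_, ?_⟩, ?_, ?_, ?_, ?_, ?_⟩, rfl, rfl⟩
    · exact List.cons_ne_nil _ _
    · intro e he
      simp only [List.mem_cons] at he
      rcases he with rfl | rfl | he
      · exact hτ1
      · left
        rw [show Sym2.mk.uncurry ((d, c) : OArc N) = s(c, d) from Sym2.eq_swap]
        exact hτ2
      · exact hβarcs e (by simp [he])
    · rfl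
    · rw [List.getLast?_cons_cons, List.getLast?_cons_cons]
      exact hβlast
    · simp only [List.Chain']
      rw [List.isChain_cons_cons]
      exact ⟨rfl, by rw [List.isChain_cons_cons]; exact ⟨hb0, hβchain⟩⟩
    · have hred' : List.Chain' (fun e f => f ≠ (e.2, e.1)) (b0 :: β2) := hβred
      simp only [IsReduced, List.Chain']
      rw [List.isChain_cons_cons, List.isChain_cons_cons]
      refine ⟨?_, ?_, hred'⟩
      · intro h
        have hca : c = a := (Prod.ext_iff.1 h).2
        exact coordNe c a (by rw [sub_self, ZMod.val_zero]; omega) hca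
      · intro h
        exact hβav b0 List.mem_cons_self (by rw [h]; rfl)
    · rw [Nat.odd_iff] at hβodd ⊢
      simp only [List.length_cons] at *
      omega
    · intro i hi hio
      rcases Nat.lt_or_ge i 3 with h3 | h3
      · have hi1 : i = 1 := by omega
        subst hi1
        have hg1 : ((a, d) :: (d, c) :: b0 :: β2).get ⟨1, hi⟩ = ((d, c) : OArc N) := rfl
        rw [hg1, show Sym2.mk.uncurry ((d, c) : OArc N) = s(c, d) from Sym2.eq_swap]
        exact ⟨hτ2, hτ2γ⟩
      · obtain ⟨k, rfl⟩ : ∃ k, i = k + 2 := ⟨i - 2, by omega⟩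
        have hk : k < (b0 :: β2).length := by simp only [List.length_cons] at hi ⊢; omega
        have hko : k % 2 = 1 := by omega
        have hg : ((a, d) :: (d, c) :: b0 :: β2).get ⟨k + 2, hi⟩ = (b0 :: β2).get ⟨k, hk⟩ := rfl
        rw [hg]
        obtain ⟨u, v, he, h1, h2, h3'⟩ := sideβ k hk hko
        refine ⟨(hβ4 k hk hko).1, ?_⟩
        rw [he]
        exact crossγ_intro u v (by omega) h2 h3'
    · intro i j hi hj hio hjo hne
      rcases Nat.lt_or_ge i 3 with h3i | h3i <;> rcases Nat.lt_or_ge j 3 with h3j | h3j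
      · exact absurd (by omega : i = j) hne
      · have hi1 : i = 1 := by omega
        subst hi1
        obtain ⟨k, rfl⟩ : ∃ k, j = k + 2 := ⟨j - 2, by omega⟩
        have hk : k < (b0 :: β2).length := by simp only [List.length_cons] at hj ⊢; omega
        have hg : ((a, d) :: (d, c) :: b0 :: β2).get ⟨k + 2, hj⟩ = (b0 :: β2).get ⟨k, hk⟩ := rfl
        have hg1 : ((a, d) :: (d, c) :: b0 :: β2).get ⟨1, hi⟩ = ((d, c) : OArc N) := rfl
        rw [hg, hg1, show Sym2.mk.uncurry ((d, c) : OArc N) = s(c, d) from Sym2.eq_swap]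
        exact fun h => hβav _ (List.get_mem _ _) h.symm
      · have hj1 : j = 1 := by omega
        subst hj1
        obtain ⟨k, rfl⟩ : ∃ k, i = k + 2 := ⟨i - 2, by omega⟩
        have hk : k < (b0 :: β2).length := by simp only [List.length_cons] at hi ⊢; omega
        have hg : ((a, d) :: (d, c) :: b0 :: β2).get ⟨k + 2, hi⟩ = (b0 :: β2).get ⟨k, hk⟩ := rfl
        have hg1 : ((a, d) :: (d, c) :: b0 :: β2).get ⟨1, hj⟩ = ((d, c) : OArc N) := rfl
        rw [hg, hg1, show Sym2.mk.uncurry ((d, c) : OArc N) = s(c, d) from Sym2.eq_swap]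
        exact fun h => hβav _ (List.get_mem _ _) h
      · obtain ⟨k, rfl⟩ : ∃ k, i = k + 2 := ⟨i - 2, by omega⟩
        obtain ⟨l, rfl⟩ : ∃ l, j = l + 2 := ⟨j - 2, by omega⟩
        have hk : k < (b0 :: β2).length := by simp only [List.length_cons] at hi ⊢; omega
        have hl : l < (b0 :: β2).length := by simp only [List.length_cons] at hj ⊢; omega
        have hgk : ((a, d) :: (d, c) :: b0 :: β2).get ⟨k + 2, hi⟩ = (b0 :: β2).get ⟨k, hk⟩ := rfl
        have hgl : ((a, d) :: (d, c) :: b0 :: β2).get ⟨l + 2, hj⟩ = (b0 :: β2).get ⟨l, hl⟩ := rfl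
        rw [hgk, hgl]
        exact hβ5 k l hk hl (by omega) (by omega) (by omega)
    · intro i j hi hj hio hjo hij
      rcases Nat.lt_or_ge i 3 with h3i | h3i
      · have hi1 : i = 1 := by omega
        subst hi1
        obtain ⟨k, rfl⟩ : ∃ k, j = k + 2 := ⟨j - 2, by omega⟩
        have hk : k < (b0 :: β2).length := by simp only [List.length_cons] at hj ⊢; omega
        have hko : k % 2 = 1 := by omega
        have hg : ((a, d) :: (d, c) :: b0 :: β2).get ⟨k + 2, hj⟩ = (b0 :: β2).get ⟨k, hk⟩ := rfl
        have hg1 : ((a, d) :: (d, c) :: b0 :: β2).get ⟨1, hi⟩ = ((d, c) : OArc N) := rfl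
        rw [hg, hg1, show Sym2.mk.uncurry ((d, c) : OArc N) = s(c, d) from Sym2.eq_swap]
        obtain ⟨u, v, he, h1, h2, h3'⟩ := sideβ k hk hko
        rw [he]
        have hT' : s(u, v) ∈ T := by rw [← he]; exact (hβ4 k hk hko).1
        have hneq : s(u, v) ≠ s(c, d) := by rw [← he]; exact hβav _ (List.get_mem _ _)
        exact hfirst _ hT' (crossγ_intro u v (by omega) h2 h3') hneq
      · obtain ⟨k, rfl⟩ : ∃ k, i = k + 2 := ⟨i - 2, by omega⟩
        obtain ⟨l, rfl⟩ : ∃ l, j = l + 2 := ⟨j - 2, by omega⟩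
        have hk : k < (b0 :: β2).length := by simp only [List.length_cons] at hi ⊢; omega
        have hl : l < (b0 :: β2).length := by simp only [List.length_cons] at hj ⊢; omega
        have hgk : ((a, d) :: (d, c) :: b0 :: β2).get ⟨k + 2, hi⟩ = (b0 :: β2).get ⟨k, hk⟩ := rfl
        have hgl : ((a, d) :: (d, c) :: b0 :: β2).get ⟨l + 2, hj⟩ = (b0 :: β2).get ⟨l, hl⟩ := rfl
        rw [hgk, hgl]
        obtain ⟨u, v, he, h1, h2, h3'⟩ := sideβ k hk (by omega)
        obtain ⟨u', v', he', h1', h2', h3''⟩ := sideβ l hl (by omega)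
        have hcb := hβ6 k l hk hl (by omega) (by omega) (by omega)
        rw [he, he'] at hcb
        rw [he, he']
        exact (cbγ u v u' v' (by omega) h2 h3' (by omega) h2' h3'').2
          ((cbρ u v u' v' h1 h2 h3' h1' h2' h3'').1 hcb)
  · -- InjOn
    intro β1 h1 β2' h2 h
    simpa using h
  · -- SurjOn
    rintro α' ⟨hTG', hhead, htail⟩
    obtain ⟨p, t, rfl⟩ : ∃ p t, α' = p :: t := by
      cases α' with
      | nil => simp at hhead
      | cons p t => exact ⟨p, t, rfl⟩
    obtain rfl : p = (a, d) := by simpa using hhead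
    obtain ⟨q, β, rfl⟩ : ∃ q β, t = q :: β := by
      cases t with
      | nil => simp at htail
      | cons q β => exact ⟨q, β, rfl⟩
    obtain rfl : q = (d, c) := by simpa using htail
    obtain ⟨⟨hne, harcs, hhead2, hlast, hchain⟩, hred, hodd, h4, h5, h6⟩ := hTG'
    rcases β with _ | ⟨b0, β2⟩
    · exfalso
      rw [Nat.odd_iff] at hodd
      simp at hodd
    have hlen : ((a, d) :: (d, c) :: b0 :: β2).length = β2.length + 3 := by simp
    have hch := fun i (h : i < ((a, d) :: (d, c) :: b0 :: β2).length - 1) =>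
      List.isChain_iff_getElem.1 hchain i (by omega)
    have hred' : List.Chain' (fun e f => f ≠ (e.2, e.1)) ((a, d) :: (d, c) :: b0 :: β2) := hred
    have hrch := fun i (h : i < ((a, d) :: (d, c) :: b0 :: β2).length - 1) =>
      List.isChain_iff_getElem.1 hred' i (by omega)
    have oddRep : ∀ j (hj : j < ((a, d) :: (d, c) :: b0 :: β2).length), j % 2 = 1 → 3 ≤ j →
        ∃ u v, Sym2.mk.uncurry (((a, d) :: (d, c) :: b0 :: β2).get ⟨j, hj⟩) = s(u, v) ∧
          0 < (u - a).val ∧ (u - a).val < (b - a).val ∧ (b - a).val < (v - a).val ∧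
          (c - a).val ≤ (u - a).val ∧ (v - a).val ≤ (d - a).val := by
      intro j hj hjo hj3
      obtain ⟨hjT, hjcr⟩ := h4 j hj hjo
      obtain ⟨u, v, he, h1', h2'⟩ := crosses_iff.1 hjcr
      obtain ⟨hu1, hu2⟩ := (sAB u).1 h1'
      have hv1 := (sBA v).1 h2'
      have h1lt : (1 : ℕ) < ((a, d) :: (d, c) :: b0 :: β2).length := by simp
      have hcb := h6 1 j h1lt hj (by norm_num) hjo (by omega)
      have hg1 : ((a, d) :: (d, c) :: b0 :: β2).get ⟨1, h1lt⟩ = ((d, c) : OArc N) := rfl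
      rw [hg1, show Sym2.mk.uncurry ((d, c) : OArc N) = s(c, d) from Sym2.eq_swap, he] at hcb
      have hsq := (cbγ c d u v hC1 hC2 hD1 hu1 hu2 hv1).1 hcb
      have e1 := aInv v (by omega)
      have e2 := aInv d (by omega)
      exact ⟨u, v, he, hu1, hu2, hv1, hsq.1, hsq.2.1⟩
    have claimX : ∀ j, ∀ (hj : j < ((a, d) :: (d, c) :: b0 :: β2).length), j % 2 = 1 → 3 ≤ j →
        (((a, d) :: (d, c) :: b0 :: β2).get ⟨j, hj⟩).1 ≠ c ∧ (((a, d) :: (d, c) :: b0 :: β2).get ⟨j, hj⟩).2 ≠ c := by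
      intro j
      induction j using Nat.strong_induction_on with
      | _ j IH =>
        intro hj hjo hj3
        obtain ⟨u, v, he, hu1, hu2, hv1, hcu, hvd⟩ := oddRep j hj hjo hj3
        have hvne : v ≠ c := coordNe v c (by omega)
        have hune : u ≠ c := by
          intro hueq
          have hUC : (u - a).val = (c - a).val := by rw [hueq]
          rcases Nat.lt_or_ge j 5 with hj5 | hj5
          · have hj3' : j = 3 := by omega
            subst hj3'
            have h2lt : (2 : ℕ) < ((a, d) :: (d, c) :: b0 :: β2).length := by omega
            have hb2 : (2 : ℕ) < ((a, d) :: (d, c) :: b0 :: β2).length - 1 := by simp only [List.length_cons] at hj ⊢; omega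
            have hb1 : (1 : ℕ) < ((a, d) :: (d, c) :: b0 :: β2).length - 1 := by omega
            have e23 : (((a, d) :: (d, c) :: b0 :: β2).get ⟨3, hj⟩).1 = (((a, d) :: (d, c) :: b0 :: β2).get ⟨2, h2lt⟩).2 := hch 2 hb2
            have e12 : (((a, d) :: (d, c) :: b0 :: β2).get ⟨2, h2lt⟩).1 = c := hch 1 hb1
            rcases mk_pair_cases _ he with hor | hor
            · have hstart : (((a, d) :: (d, c) :: b0 :: β2).get ⟨3, hj⟩).1 = c := by rw [hor, hueq]
              have hg2 : ((a, d) :: (d, c) :: b0 :: β2).get ⟨2, h2lt⟩ = ((c, c) : OArc N) :=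
                Prod.ext e12 (by rw [← e23, hstart])
              have hmem := harcs _ (List.get_mem _ ⟨2, h2lt⟩)
              rw [hg2] at hmem
              exact noLoop c hmem
            · have hg2 : ((a, d) :: (d, c) :: b0 :: β2).get ⟨2, h2lt⟩ = ((c, v) : OArc N) :=
                Prod.ext e12 (by rw [← e23, hor])
              have hr' : ((a, d) :: (d, c) :: b0 :: β2).get ⟨3, hj⟩ ≠
                  (((((a, d) :: (d, c) :: b0 :: β2).get ⟨2, h2lt⟩).2, (((a, d) :: (d, c) :: b0 :: β2).get ⟨2, h2lt⟩).1) : OArc N) := hrch 2 hb2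
              apply hr'
              rw [hor, hg2, hueq]
          · have hj2 : j - 2 < ((a, d) :: (d, c) :: b0 :: β2).length := by omega
            obtain ⟨u', v', he', hu1', hu2', hv1', hcu', hvd'⟩ :=
              oddRep (j - 2) hj2 (by omega) (by omega)
            have hcb := h6 (j - 2) j hj2 hj (by omega) hjo (by omega)
            rw [he', he] at hcb
            have hsq := (cbγ u' v' u v hu1' hu2' hv1' hu1 hu2 hv1).1 hcb
            have hu'c : u' = c := coordInj _ _ (by omega)
            have hIH := IH (j - 2) (by omega) hj2 (by omega) (by omega)
            rcases mk_pair_cases _ he' with hor | hor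
            · exact hIH.1 (by rw [hor, hu'c])
            · exact hIH.2 (by rw [hor, hu'c])
        rcases mk_pair_cases _ he with hor | hor
        · exact ⟨by rw [hor]; exact hune, by rw [hor]; exact hvne⟩
        · exact ⟨by rw [hor]; exact hvne, by rw [hor]; exact hune⟩
    have oddRepβ : ∀ k (hk : k < (b0 :: β2).length), k % 2 = 1 →
        ∃ u v, Sym2.mk.uncurry ((b0 :: β2).get ⟨k, hk⟩) = s(u, v) ∧
          (c - a).val < (u - a).val ∧ (u - a).val < (b - a).val ∧
          (b - a).val < (v - a).val := by
      intro k hk hko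
      have hk2 : k + 2 < ((a, d) :: (d, c) :: b0 :: β2).length := by simp only [List.length_cons] at hk ⊢; omega
      obtain ⟨u, v, he, hu1, hu2, hv1, hcu, hvd⟩ := oddRep (k + 2) hk2 (by omega) (by omega)
      have hx := claimX (k + 2) hk2 (by omega) (by omega)
      have hune : u ≠ c := by
        rcases mk_pair_cases _ he with hor | hor
        · exact fun h => hx.1 (by rw [hor, h])
        · exact fun h => hx.2 (by rw [hor, h])
      have heβ : Sym2.mk.uncurry ((b0 :: β2).get ⟨k, hk⟩) = s(u, v) := he
      have hne' : (u - a).val ≠ (c - a).val := fun h => hune (coordInj u c h)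
      exact ⟨u, v, heβ, by omega, hu2, hv1⟩
    have hb0 : b0.1 = c := (List.isChain_cons_cons.1 (List.isChain_cons_cons.1 hchain).2).1
    refine ⟨b0 :: β2, ⟨⟨⟨?_, ?_, ?_, ?_, ?_⟩, ?_, ?_, ?_, ?_, ?_⟩, ?_⟩, rfl⟩
    · exact List.cons_ne_nil _ _
    · intro e he
      exact harcs e (List.mem_cons_of_mem _ (List.mem_cons_of_mem _ he))
    · simp [hb0]
    · rw [List.getLast?_cons_cons, List.getLast?_cons_cons] at hlast
      exact hlast
    · exact (List.isChain_cons_cons.1 (List.isChain_cons_cons.1 hchain).2).2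
    · exact (List.isChain_cons_cons.1 (List.isChain_cons_cons.1 hred').2).2
    · rw [Nat.odd_iff] at hodd ⊢
      simp only [List.length_cons] at *
      omega
    · intro k hk hko
      obtain ⟨u, v, he, h1', h2', h3'⟩ := oddRepβ k hk hko
      have hk2 : k + 2 < ((a, d) :: (d, c) :: b0 :: β2).length := by simp only [List.length_cons] at hk ⊢; omega
      have hg : ((a, d) :: (d, c) :: b0 :: β2).get ⟨k + 2, hk2⟩ = (b0 :: β2).get ⟨k, hk⟩ := rfl
      constructor
      · have hmem := (h4 (k + 2) hk2 (by omega)).1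
        rw [hg] at hmem
        exact hmem
      · rw [he]
        exact crossρ_intro u v h1' h2' h3'
    · intro i j hi hj hio hjo hne
      have hi2 : i + 2 < ((a, d) :: (d, c) :: b0 :: β2).length := by simp only [List.length_cons] at hi ⊢; omega
      have hj2 : j + 2 < ((a, d) :: (d, c) :: b0 :: β2).length := by simp only [List.length_cons] at hj ⊢; omega
      have hgi : ((a, d) :: (d, c) :: b0 :: β2).get ⟨i + 2, hi2⟩ = (b0 :: β2).get ⟨i, hi⟩ := rfl
      have hgj : ((a, d) :: (d, c) :: b0 :: β2).get ⟨j + 2, hj2⟩ = (b0 :: β2).get ⟨j, hj⟩ := rfl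
      have hd5 := h5 (i + 2) (j + 2) hi2 hj2 (by omega) (by omega) (by omega)
      rw [hgi, hgj] at hd5
      exact hd5
    · intro i j hi hj hio hjo hij
      have hi2 : i + 2 < ((a, d) :: (d, c) :: b0 :: β2).length := by simp only [List.length_cons] at hi ⊢; omega
      have hj2 : j + 2 < ((a, d) :: (d, c) :: b0 :: β2).length := by simp only [List.length_cons] at hj ⊢; omega
      obtain ⟨u, v, he, h1', h2', h3'⟩ := oddRepβ i hi hio
      obtain ⟨u', v', he', h1'', h2'', h3''⟩ := oddRepβ j hj hjo
      have hcb := h6 (i + 2) (j + 2) hi2 hj2 (by omega) (by omega) (by omega)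
      have hei : Sym2.mk.uncurry (((a, d) :: (d, c) :: b0 :: β2).get ⟨i + 2, hi2⟩) = s(u, v) := he
      have hej : Sym2.mk.uncurry (((a, d) :: (d, c) :: b0 :: β2).get ⟨j + 2, hj2⟩) = s(u', v') := he'
      rw [hei, hej] at hcb
      rw [he, he']
      exact (cbρ u v u' v' h1' h2' h3' h1'' h2'' h3'').2
        ((cbγ u v u' v' (by omega) h2' h3' (by omega) h2'' h3'').1 hcb)
    · intro f hf
      obtain ⟨⟨k, hk⟩, rfl⟩ := List.mem_iff_get.1 hf
      intro hEq
      have hk2 : k + 2 < ((a, d) :: (d, c) :: b0 :: β2).length := by simp only [List.length_cons] at hk ⊢; omega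
      have hEq' : Sym2.mk.uncurry (((a, d) :: (d, c) :: b0 :: β2).get ⟨k + 2, hk2⟩) = s(c, d) := hEq
      rcases Nat.even_or_odd k with hke | hko
      · have hke' := Nat.even_iff.1 hke
        rcases mk_pair_cases _ hEq' with hor | hor
        · rcases eq_or_ne k 0 with rfl | hk0
          · have hb1 : (1 : ℕ) < ((a, d) :: (d, c) :: b0 :: β2).length - 1 := by
              simp only [List.length_cons] at hk2 ⊢; omega
            have hr' : ((a, d) :: (d, c) :: b0 :: β2).get ⟨2, hk2⟩ ≠
                ((c, d) : OArc N) := hrch 1 hb1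
            exact hr' (show ((a, d) :: (d, c) :: b0 :: β2).get ⟨2, hk2⟩ = _ from hor)
          · have hk1 : k + 1 < ((a, d) :: (d, c) :: b0 :: β2).length := by omega
            have hb : k + 1 < ((a, d) :: (d, c) :: b0 :: β2).length - 1 := by omega
            have hchk : (((a, d) :: (d, c) :: b0 :: β2).get ⟨k + 2, hk2⟩).1 = (((a, d) :: (d, c) :: b0 :: β2).get ⟨k + 1, hk1⟩).2 := hch (k + 1) hb
            have hend : (((a, d) :: (d, c) :: b0 :: β2).get ⟨k + 1, hk1⟩).2 = c := by rw [← hchk, hor]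
            exact (claimX (k + 1) hk1 (by omega) (by omega)).2 hend
        · rcases eq_or_ne (k + 2) (((a, d) :: (d, c) :: b0 :: β2).length - 1) with hlastk | hlastk
          · have hlb : ∀ (m : ℕ) (hm : m < ((a, d) :: (d, c) :: b0 :: β2).length), m = ((a, d) :: (d, c) :: b0 :: β2).length - 1 →
                (((a, d) :: (d, c) :: b0 :: β2).get ⟨m, hm⟩).2 = b := by
              intro m hm hme
              subst hme
              have h1 : ((a, d) :: (d, c) :: b0 :: β2).getLast? = some (((a, d) :: (d, c) :: b0 :: β2).get ⟨((a, d) :: (d, c) :: b0 :: β2).length - 1, hm⟩) := by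
                rw [List.getLast?_eq_getElem?, List.getElem?_eq_getElem (by omega)]
                simp [List.get_eq_getElem]
              rw [h1] at hlast
              simpa using hlast
            have hcb2 := hlb (k + 2) hk2 hlastk
            rw [hor] at hcb2
            exact coordNe c b (by omega) hcb2
          · have hk3 : k + 3 < ((a, d) :: (d, c) :: b0 :: β2).length := by omega
            have hb : k + 2 < ((a, d) :: (d, c) :: b0 :: β2).length - 1 := by omega
            have hchk : (((a, d) :: (d, c) :: b0 :: β2).get ⟨k + 3, hk3⟩).1 = (((a, d) :: (d, c) :: b0 :: β2).get ⟨k + 2, hk2⟩).2 := hch (k + 2) hb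
            have hend : (((a, d) :: (d, c) :: b0 :: β2).get ⟨k + 3, hk3⟩).1 = c := by rw [hchk, hor]
            exact (claimX (k + 3) hk3 (by omega) (by omega)).1 hend
      · have hko' := Nat.odd_iff.1 hko
        have h1lt : (1 : ℕ) < ((a, d) :: (d, c) :: b0 :: β2).length := by simp
        have hd5 := h5 1 (k + 2) h1lt hk2 (by norm_num) (by omega) (by omega)
        have hg1 : Sym2.mk.uncurry (((a, d) :: (d, c) :: b0 :: β2).get ⟨1, h1lt⟩) = s(c, d) := by
          rw [show ((a, d) :: (d, c) :: b0 :: β2).get ⟨1, h1lt⟩ = ((d, c) : OArc N) from rfl]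
          exact Sym2.eq_swap
        exact hd5 (hg1.trans hEq'.symm)
  · -- value identity
    intro β hTG hav
    rw [pathValue_cons_cons, div_eq_mul_inv,
      show s((c : ZMod N), d) = s(d, c) from Sym2.eq_swap]
    rfl


end PolygonCA
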